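/- For any positive irrational θ, the upper-trimmed subsequence of the signature sequence S_θ equals S_θ itself. -/

import Mathlib

/-- `upperTrim S` removes from `S` every first occurrence of every value. -/
noncomputable def upperTrim (S : ℕ → ℕ) : ℕ → ℕ :=
  fun k => S (Nat.nth (fun i => ¬ ∀ j < i, S j ≠ S i) k)

/-- `lowerTrim S` subtracts 1 from each term and deletes the resulting zeros. -/
noncomputable def lowerTrim (S : ℕ → ℕ) : ℕ → ℕ :=
  fun k => S (Nat.nth (fun i => 2 ≤ S i) k) - 1

/-- A sequence of positive integers, in which every positive integer occurs,
is doubly fractal if its first term is 1 and both trimmings return `S`. -/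
def DoublyFractal (S : ℕ → ℕ) : Prop :=
  (∀ i, 0 < S i) ∧ (∀ m, 0 < m → ∃ i, S i = m) ∧
  S 0 = 1 ∧ upperTrim S = S ∧ lowerTrim S = S

/-- `S` is the signature sequence of `θ`: there is an enumeration `p` of all pairs of
positive integers, sorted increasingly by the value `i + j*θ`, with `S k = (p k).1`. -/
def IsSignature (θ : ℝ) (S : ℕ → ℕ) : Prop :=
  ∃ p : ℕ → ℕ × ℕ,
    (∀ k, 0 < (p k).1 ∧ 0 < (p k).2) ∧
    (∀ i j, 0 < i → 0 < j → ∃ k, p k = (i, j)) ∧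
    StrictMono (fun k => ((p k).1 : ℝ) + (p k).2 * θ) ∧
    ∀ k, S k = (p k).1

/-! Since `θ > 0`, the pair `(i, 1)` precedes every `(i, j)` with `j ≥ 2`, so the positions of
repeated values are exactly those of the pairs with `j ≥ 2`, i.e. of the shifts
`(i, j) ↦ (i, j + 1)` of all pairs. The shift adds `θ` to every value and so preserves the order:
it enumerates the repeated positions increasingly, and it does not change first coordinates. -/

theorem Nat.nth_eq_of_strictMono_of_range_eq {P : ℕ → Prop} {f : ℕ → ℕ} (hf : StrictMono f)
    (hrange : Set.range f = {x | P x}) : Nat.nth P = f := by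
  have hinf : ({x | P x}).Infinite := hrange ▸ Set.infinite_range_of_injective hf.injective
  rw [← (Nat.nth_strictMono hinf).range_inj hf, Nat.range_nth_of_infinite hinf, hrange]

theorem upperTrim_eq_comp {S σ : ℕ → ℕ} (hσ : StrictMono σ)
    (hrange : Set.range σ = {i | ∃ j < i, S j = S i}) : upperTrim S = S ∘ σ := by
  have hrepeat : (fun i => ¬ ∀ j < i, S j ≠ S i) = fun i => ∃ j < i, S j = S i := by
    funext i
    push Not
    rfl
  unfold upperTrim
  rw [hrepeat, Nat.nth_eq_of_strictMono_of_range_eq hσ hrange]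
  rfl

def pairValue (θ : ℝ) (q : ℕ × ℕ) : ℝ := q.1 + q.2 * θ

theorem pairValue_lt_pairValue_iff {θ : ℝ} (hθ : 0 < θ) {q r : ℕ × ℕ} (h : q.1 = r.1) :
    pairValue θ q < pairValue θ r ↔ q.2 < r.2 := by
  rw [pairValue, pairValue, h, add_lt_add_iff_left, mul_lt_mul_iff_left₀ hθ, Nat.cast_lt]

theorem pairValue_shift (θ : ℝ) (q : ℕ × ℕ) : pairValue θ (q.1, q.2 + 1) = pairValue θ q + θ := by
  simp only [pairValue]
  push_cast
  ring

section Enumeration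

variable {θ : ℝ} {p : ℕ → ℕ × ℕ}

theorem exists_lt_fst_eq_iff_two_le_snd (hθ : 0 < θ) (hp : ∀ k, 0 < (p k).1 ∧ 0 < (p k).2)
    (hsurj : ∀ i j, 0 < i → 0 < j → ∃ k, p k = (i, j)) (hmono : StrictMono (pairValue θ ∘ p))
    (i : ℕ) : (∃ j < i, (p j).1 = (p i).1) ↔ 2 ≤ (p i).2 := by
  constructor
  · rintro ⟨j, hji, hfst⟩
    have hsnd := (pairValue_lt_pairValue_iff hθ hfst).1 (hmono hji)
    have := (hp j).2
    omega
  · intro hi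
    obtain ⟨k, hk⟩ := hsurj (p i).1 1 (hp i).1 one_pos
    refine ⟨k, hmono.lt_iff_lt.1 ?_, by rw [hk]⟩
    rw [Function.comp_apply, Function.comp_apply, pairValue_lt_pairValue_iff hθ (by rw [hk]), hk]
    omega

theorem exists_strictMono_shift (hp : ∀ k, 0 < (p k).1 ∧ 0 < (p k).2)
    (hsurj : ∀ i j, 0 < i → 0 < j → ∃ k, p k = (i, j)) (hmono : StrictMono (pairValue θ ∘ p)) :
    ∃ σ : ℕ → ℕ, StrictMono σ ∧ ∀ k, p (σ k) = ((p k).1, (p k).2 + 1) := by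
  choose σ hσ using fun k => hsurj (p k).1 ((p k).2 + 1) (hp k).1 (Nat.succ_pos _)
  refine ⟨σ, fun k l hkl => hmono.lt_iff_lt.1 ?_, hσ⟩
  have := hmono hkl
  simp only [Function.comp_apply, hσ, pairValue_shift] at this ⊢
  linarith

theorem range_shift_eq {σ : ℕ → ℕ} (hp : ∀ k, 0 < (p k).1 ∧ 0 < (p k).2)
    (hsurj : ∀ i j, 0 < i → 0 < j → ∃ k, p k = (i, j)) (hmono : StrictMono (pairValue θ ∘ p))
    (hσ : ∀ k, p (σ k) = ((p k).1, (p k).2 + 1)) : Set.range σ = {i | 2 ≤ (p i).2} := by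
  ext i
  constructor
  · rintro ⟨k, rfl⟩
    have := (hp k).2
    simp only [Set.mem_ofPred_eq, hσ]
    omega
  · intro (hi : 2 ≤ (p i).2)
    obtain ⟨k, hk⟩ := hsurj (p i).1 ((p i).2 - 1) (hp i).1 (by omega)
    refine ⟨k, hmono.injective.of_comp ?_⟩
    simp only [hσ, hk]
    congr
    omega

end Enumeration

theorem stmt13_general (θ : ℝ) (hpos : 0 < θ)
    (S : ℕ → ℕ) (hS : IsSignature θ S) : upperTrim S = S := by
  obtain ⟨p, hp, hsurj, hmono, hSk⟩ := hS
  obtain rfl : S = fun k => (p k).1 := funext hSk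
  obtain ⟨σ, hσmono, hσ⟩ := exists_strictMono_shift hp hsurj hmono
  have hrepeat : Set.range σ = {i | ∃ j < i, (p j).1 = (p i).1} := by
    rw [range_shift_eq hp hsurj hmono hσ]
    ext i
    exact (exists_lt_fst_eq_iff_two_le_snd hpos hp hsurj hmono i).symm
  rw [upperTrim_eq_comp hσmono hrepeat]
  funext k
  simp only [Function.comp_apply, hσ]

/-- The upper-trimmed subsequence of a signature sequence is itself. -/
theorem stmt13 (θ : ℝ) (hpos : 0 < θ) (hirr : Irrational θ)
    (S : ℕ → ℕ) (hS : IsSignature θ S) : upperTrim S = S :=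
  stmt13_general θ hpos S hS
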